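/- arXiv:2401.02657 — 2 statements merged into one kernel-verified Lean document; each statement's English description precedes it below -/
import Mathlib

section
/- For coprime positive integers s and n with 1 ≤ s < n, the resultant of the polynomials (x^s - 1)/(x - 1) and (x^(n-s) - 1)/(x - 1) equals 1. -/
open Polynomial

/-- coefficient of the geometric-sum polynomial -/
lemma geom_coeff (R : Type*) [Semiring R] (n k : ℕ) :
    (∑ i ∈ Finset.range n, (X : R[X]) ^ i).coeff k = if k < n then 1 else 0 := by
  rw [Polynomial.finset_sum_coeff]
  simp only [Polynomial.coeff_X_pow]
  simp only [eq_comm (a := k)]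
  rw [Finset.sum_ite_eq' (Finset.range n) k (fun _ => (1:R))]
  simp [Finset.mem_range]

lemma geom_monic (R : Type*) [Semiring R] {n : ℕ} (hn : 1 ≤ n) :
    (∑ i ∈ Finset.range n, (X : R[X]) ^ i).Monic := by
  have h := Polynomial.monic_geom_sum_X (R := R) (Nat.one_le_iff_ne_zero.mp hn)
  exact h

lemma geom_natDegree (R : Type*) [Semiring R] [Nontrivial R] {n : ℕ} (hn : 1 ≤ n) :
    (∑ i ∈ Finset.range n, (X : R[X]) ^ i).natDegree = n - 1 := by
  have hm := geom_monic R hn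
  refine le_antisymm (Polynomial.natDegree_le_iff_coeff_eq_zero.mpr fun k hk => ?_) ?_
  · rw [geom_coeff]; rw [if_neg]; omega
  · refine Polynomial.le_natDegree_of_ne_zero ?_
    rw [geom_coeff, if_pos (by omega)]
    exact one_ne_zero

lemma pow_mod_eq {M : Type*} [Monoid M] (x : M) (s : ℕ) (hx : x ^ s = 1) (m : ℕ) :
    x ^ m = x ^ (m % s) := by
  conv_lhs => rw [← Nat.div_add_mod m s]
  rw [pow_add, pow_mul, hx, one_pow, one_mul]

lemma mod_helper {s t u : ℕ} (j : ℕ) (hut : (t * u) % s = 1 % s) (hj : j < s) :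
    (t * ((u * j) % s)) % s = j := by
  have h1 : t * ((u * j) % s) ≡ t * (u * j) [MOD s] :=
    Nat.ModEq.mul_left t (Nat.mod_modEq _ _)
  have h3 : (t * u) * j ≡ 1 * j [MOD s] := Nat.ModEq.mul_right j hut
  have h4 : t * ((u * j) % s) ≡ 1 * j [MOD s] := h1.trans (by rw [← mul_assoc]; exact h3)
  have h5 : t * ((u * j) % s) % s = (1 * j) % s := h4
  rwa [one_mul, Nat.mod_eq_of_lt hj] at h5

lemma exists_inv_mod {s t : ℕ} (hs : 1 ≤ s) (hcop : Nat.Coprime t s) :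
    ∃ u, (t * u) % s = 1 % s := by
  rcases eq_or_lt_of_le hs with h | h
  · exact ⟨0, by rw [← h]; simp⟩
  · obtain ⟨u, -, hu⟩ := Nat.exists_mul_mod_eq_one_of_coprime hcop h
    exact ⟨u, by rw [hu, Nat.mod_eq_of_lt h]⟩

lemma sum_pow_reindex {M : Type*} [CommRing M] (x : M) {s t u : ℕ} (hx : x ^ s = 1)
    (hut : (t * u) % s = 1 % s) :
    ∑ i ∈ Finset.range s, x ^ (t * i) = ∑ i ∈ Finset.range s, x ^ i := by
  rcases Nat.eq_zero_or_pos s with rfl | hs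
  · simp
  refine Finset.sum_nbij' (i := fun i => (t * i) % s) (j := fun j => (u * j) % s)
    (fun a ha => Finset.mem_range.mpr (Nat.mod_lt _ hs))
    (fun a ha => Finset.mem_range.mpr (Nat.mod_lt _ hs)) ?_ ?_ ?_
  · intro a ha
    exact mod_helper (t := u) (u := t) a (by rwa [mul_comm u t]) (Finset.mem_range.mp ha)
  · intro a ha
    exact mod_helper a hut (Finset.mem_range.mp ha)
  · intro a ha
    rw [pow_mod_eq x s hx (t * a)]

open AdjoinRoot in
lemma root_geom_pow_eq_one {s : ℕ} :
    (root (∑ i ∈ Finset.range s, (X : ℚ[X]) ^ i)) ^ s = 1 := by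
  set F : ℚ[X] := ∑ i ∈ Finset.range s, (X : ℚ[X]) ^ i with hF
  have h0 : (∑ i ∈ Finset.range s, (root F) ^ i) = 0 := by
    have h := mk_self (f := F)
    rw [hF, map_sum] at h
    simpa [map_pow, mk_X] using h
  have h := geom_sum_mul (root F) s
  rw [h0, zero_mul] at h
  exact sub_eq_zero.mp h.symm

open AdjoinRoot in
lemma aeval_root_geom_pow {s t u : ℕ} (hut : (t * u) % s = 1 % s) :
    Polynomial.aeval ((root (∑ i ∈ Finset.range s, (X : ℚ[X]) ^ i)) ^ t)
      (∑ i ∈ Finset.range s, (X : ℚ[X]) ^ i) = 0 := by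
  set F : ℚ[X] := ∑ i ∈ Finset.range s, (X : ℚ[X]) ^ i with hF
  set ξ := root F
  have hξ : ξ ^ s = 1 := root_geom_pow_eq_one
  rw [map_sum]
  simp only [map_pow, aeval_X, ← pow_mul]
  rw [sum_pow_reindex ξ hξ hut]
  have h := mk_self (f := F)
  rw [hF, map_sum] at h
  simpa [map_pow, mk_X] using h

open AdjoinRoot in
lemma norm_geom_eq_one {s t : ℕ} (hs : 1 ≤ s) (hcop : Nat.Coprime t s) :
    Algebra.norm ℚ (mk (∑ i ∈ Finset.range s, (X : ℚ[X]) ^ i)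
      (∑ i ∈ Finset.range t, (X : ℚ[X]) ^ i)) = 1 := by
  set F : ℚ[X] := ∑ i ∈ Finset.range s, (X : ℚ[X]) ^ i with hF
  set ξ := root F with hξdef
  have hξ : ξ ^ s = 1 := root_geom_pow_eq_one
  obtain ⟨u, hu⟩ := exists_inv_mod hs hcop
  have hut' : (u * t) % s = 1 % s := by rwa [mul_comm u t]
  have h1 : Polynomial.aeval (ξ ^ t) F = 0 := aeval_root_geom_pow hu
  have h2 : Polynomial.aeval (ξ ^ u) F = 0 := aeval_root_geom_pow hut'
  set φ : AdjoinRoot F →ₐ[ℚ] AdjoinRoot F := liftAlgHom F (Algebra.ofId ℚ _) (ξ^t) (by rw [← h1]; rfl) with hφ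
  set ψ : AdjoinRoot F →ₐ[ℚ] AdjoinRoot F := liftAlgHom F (Algebra.ofId ℚ _) (ξ^u) (by rw [← h2]; rfl) with hψ
  have hroot : ∀ (m : ℕ), (m % s = 1 % s) → ξ ^ m = ξ := by
    intro m hm
    rcases eq_or_lt_of_le hs with h | h
    · haveI : Subsingleton (AdjoinRoot F) := by
        have hF1 : F = 1 := by rw [hF, ← h]; simp
        have h0 : (1 : AdjoinRoot F) = 0 := by
          have h2 := congrArg (mk F) hF1
          rw [mk_self, map_one] at h2
          exact h2.symm
        exact subsingleton_of_zero_eq_one h0.symm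
      exact Subsingleton.elim _ _
    · rw [pow_mod_eq ξ s hξ m, hm, Nat.mod_eq_of_lt h, pow_one]
  have hφψ : φ.comp ψ = AlgHom.id ℚ _ := by
    apply AdjoinRoot.algHom_ext
    rw [AlgHom.comp_apply, hψ, liftAlgHom_root, hφ, map_pow, liftAlgHom_root, AlgHom.id_apply, ← pow_mul,
      mul_comm t u]
    exact hroot (u * t) hut'
  have hψφ : ψ.comp φ = AlgHom.id ℚ _ := by
    apply AdjoinRoot.algHom_ext
    rw [AlgHom.comp_apply, hφ, liftAlgHom_root, hψ, map_pow, liftAlgHom_root, AlgHom.id_apply, ← pow_mul,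
      mul_comm u t]
    exact hroot (t * u) hu
  set e : AdjoinRoot F ≃ₐ[ℚ] AdjoinRoot F := AlgEquiv.ofAlgHom φ ψ hφψ hψφ with he
  set G := mk F (∑ i ∈ Finset.range t, (X : ℚ[X]) ^ i) with hG
  have key : (ξ - 1) * G = ξ ^ t - 1 := by
    have h := geom_sum_mul ξ t
    rw [mul_comm] at h
    rw [hG, map_sum]
    simpa [map_pow, mk_X] using h
  have hnorm1 : Algebra.norm ℚ (ξ ^ t - 1) = Algebra.norm ℚ (ξ - 1) := by
    have he1 : e (ξ - 1) = ξ ^ t - 1 := by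
      have hcoe : e (ξ - 1) = φ (ξ - 1) := rfl
      rw [hcoe, map_sub, map_one]
      congr 1
      exact liftAlgHom_root F _ (ξ^t) _
    rw [← he1, Algebra.norm_eq_of_algEquiv]
  -- (ξ - 1) is a unit
  have hunit : ∃ v, (ξ - 1) * v = 1 := by
    obtain ⟨q, hq⟩ := Polynomial.X_sub_C_dvd_sub_C_eval (a := (1:ℚ)) (p := F)
    have heval : F.eval 1 = (s : ℚ) := by
      rw [hF]
      simp [Polynomial.eval_finset_sum]
    rw [heval] at hq
    have hmk : (0 : AdjoinRoot F) - algebraMap ℚ _ (s : ℚ) = (ξ - 1) * mk F q := by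
      have := congrArg (mk F) hq
      rw [map_sub, mk_self] at this
      simpa [map_mul, mk_X, map_one] using this
    refine ⟨mk F q * algebraMap ℚ _ (-(s:ℚ)⁻¹), ?_⟩
    rw [← mul_assoc, ← hmk]
    rw [zero_sub, ← map_neg, ← map_mul, neg_mul_neg,
      mul_inv_cancel₀ (Nat.cast_ne_zero.mpr (by omega : s ≠ 0)), map_one]
  obtain ⟨v, hv⟩ := hunit
  have hne : Algebra.norm ℚ (ξ - 1) ≠ 0 := by
    have := congrArg (Algebra.norm ℚ) hv
    rw [map_mul, map_one] at this
    exact left_ne_zero_of_mul_eq_one this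
  have hmain : Algebra.norm ℚ (ξ - 1) * Algebra.norm ℚ G = Algebra.norm ℚ (ξ - 1) * 1 := by
    rw [← map_mul, key, hnorm1, mul_one]
  exact mul_left_cancel₀ hne hmain

open AdjoinRoot in
lemma det_modmat_eq_one {s t : ℕ} (hs : 1 ≤ s) (hcop : Nat.Coprime t s) :
    Matrix.det (Matrix.of fun k j : Fin (s-1) =>
      (((X : ℚ[X]) ^ (k:ℕ) * (∑ i ∈ Finset.range t, (X : ℚ[X]) ^ i)) %ₘ
        (∑ i ∈ Finset.range s, (X : ℚ[X]) ^ i)).coeff (j:ℕ)) = 1 := by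
  set F : ℚ[X] := ∑ i ∈ Finset.range s, (X : ℚ[X]) ^ i with hF
  set G : ℚ[X] := ∑ i ∈ Finset.range t, (X : ℚ[X]) ^ i with hG
  have hm : F.Monic := geom_monic ℚ hs
  have hd : F.natDegree = s - 1 := geom_natDegree ℚ hs
  set b := powerBasisAux' hm with hb
  have hbj : ∀ j : Fin F.natDegree, b j = root F ^ (j:ℕ) := by
    intro j
    have := (powerBasis' hm).basis_eq_pow j
    exact this
  have hmat : ∀ i j : Fin F.natDegree,
      Algebra.leftMulMatrix b (mk F G) i j = ((X ^ (j:ℕ) * G) %ₘ F).coeff (i:ℕ) := by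
    intro i j
    rw [Algebra.leftMulMatrix_apply, LinearMap.toMatrix_apply, hbj]
    have hmul : (Algebra.lmul ℚ (AdjoinRoot F)) (mk F G) (root F ^ (j:ℕ))
        = mk F (X ^ (j:ℕ) * G) := by
      simp [Algebra.lmul, map_mul, map_pow, mk_X, mul_comm]
    rw [hmul, hb, powerBasisAux'_repr_apply_to_fun, modByMonicHom_mk]
  have hnorm := Algebra.norm_eq_matrix_det b (mk F G)
  have h1 : Algebra.norm ℚ (mk F G) = 1 := norm_geom_eq_one hs hcop
  -- transport
  have : Matrix.det (Matrix.of fun k j : Fin (s-1) => ((X ^ (k:ℕ) * G) %ₘ F).coeff (j:ℕ))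
      = Matrix.det (Matrix.of fun k j : Fin F.natDegree => ((X ^ (k:ℕ) * G) %ₘ F).coeff (j:ℕ)) := by
    rw [← Matrix.det_submatrix_equiv_self (finCongr hd)]
    congr 1
  rw [this]
  have h2 : (Matrix.of fun k j : Fin F.natDegree => ((X ^ (k:ℕ) * G) %ₘ F).coeff (j:ℕ))
      = (Algebra.leftMulMatrix b (mk F G)).transpose := by
    ext i j
    rw [Matrix.transpose_apply, hmat]
    rfl
  rw [h2, Matrix.det_transpose, ← hnorm, h1]

lemma sum_coeff_smul {n : ℕ} (p : ℚ[X]) (h : ∀ m, n ≤ m → p.coeff m = 0) :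
    ∑ a : Fin n, p.coeff (a:ℕ) • (X : ℚ[X]) ^ (a:ℕ) = p := by
  ext c
  rw [Polynomial.finset_sum_coeff]
  simp only [Polynomial.coeff_smul, Polynomial.coeff_X_pow, smul_eq_mul]
  rw [Finset.sum_congr rfl (fun a _ => by rw [mul_ite, mul_one, mul_zero])]
  by_cases hc : c < n
  · rw [Finset.sum_eq_single (⟨c, hc⟩ : Fin n)]
    · simp
    · intro b _ hb
      rw [if_neg]
      intro hcb
      exact hb (Fin.ext hcb.symm)
    · intro hmem
      exact absurd (Finset.mem_univ _) hmem
  · rw [Finset.sum_eq_zero, (h c (not_lt.mp hc)).symm]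
    intro b _
    rw [if_neg]
    have := b.isLt
    omega

open Fin.NatCast in
lemma finRotate_pow_apply {N' : ℕ} (m : ℕ) (j : Fin (N' + 1)) :
    ((finRotate (N' + 1)) ^ m) j = j + (m : Fin (N' + 1)) := by
  induction m with
  | zero => simp
  | succ k ih =>
    rw [pow_succ', Equiv.Perm.mul_apply, ih, finRotate_succ_apply]
    push_cast
    rw [add_assoc]

lemma sign_of_addRotate {n : ℕ} (σ : Equiv.Perm (Fin n)) (m s' : ℕ) (hm : n = s' + m)
    (hσ : ∀ j : Fin n, ((σ j : ℕ)) = ((j : ℕ) + m) % n) (hev : Even (s' * m)) :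
    Equiv.Perm.sign σ = 1 := by
  cases n with
  | zero =>
    have : σ = 1 := Equiv.ext fun j => absurd j.isLt (by omega)
    rw [this, map_one]
  | succ N' =>
    have hσ' : σ = (finRotate (N' + 1)) ^ m := by
      refine Equiv.ext fun j => Fin.ext ?_
      rw [finRotate_pow_apply, hσ j]
      simp only [Fin.add_def, Fin.val_natCast]
      conv_rhs => rw [Nat.add_mod]
      rw [Nat.mod_mod_of_dvd _ dvd_rfl, ← Nat.add_mod]
    rw [hσ', map_pow, sign_finRotate, ← pow_mul]
    refine Even.neg_one_pow ?_
    rcases Nat.even_or_odd m with he | ho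
    · exact Nat.even_mul.mpr (Or.inr he)
    · have hs' : Even s' := by
        rcases Nat.even_mul.mp hev with h | h
        · exact h
        · exact absurd h (Nat.not_even_iff_odd.mpr ho)
      have hm1 : 1 ≤ m := by
        rcases ho with ⟨k, hk⟩; omega
      have hN' : N' = s' + (m - 1) := by omega
      refine Nat.even_mul.mpr (Or.inl ?_)
      rw [hN']
      exact hs'.add (Nat.Odd.sub_odd ho odd_one)

open AdjoinRoot in
lemma key_det (s t : ℕ) (hs : 1 ≤ s) (ht : 1 ≤ t) (hcop : Nat.Coprime t s)
    (heven : Even ((s - 1) * (t - 1))) :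
    Matrix.det (Matrix.of fun i j : Fin ((t - 1) + (s - 1)) =>
      if (i : ℕ) < t - 1 then
        (if (i : ℕ) ≤ (j : ℕ) then
          (∑ k ∈ Finset.range s, (X : ℚ[X]) ^ k).coeff ((j : ℕ) - (i : ℕ)) else 0)
      else
        (if (i : ℕ) - (t - 1) ≤ (j : ℕ) then
          (∑ k ∈ Finset.range t, (X : ℚ[X]) ^ k).coeff ((j : ℕ) - ((i : ℕ) - (t - 1)))
        else 0)) = 1 := by
  set F : ℚ[X] := ∑ k ∈ Finset.range s, (X : ℚ[X]) ^ k with hF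
  set G : ℚ[X] := ∑ k ∈ Finset.range t, (X : ℚ[X]) ^ k with hG
  have hFm : F.Monic := geom_monic ℚ hs
  have hGm : G.Monic := geom_monic ℚ ht
  have hFd : F.natDegree = s - 1 := geom_natDegree ℚ hs
  have hGd : G.natDegree = t - 1 := geom_natDegree ℚ ht
  set P : Matrix (Fin ((t-1) + (s-1))) (Fin ((t-1) + (s-1))) ℚ := Matrix.of fun j c =>
    if (j : ℕ) < s - 1 then (if (j : ℕ) = (c : ℕ) then 1 else 0)
    else (if (j : ℕ) - (s-1) ≤ (c : ℕ) then F.coeff ((c : ℕ) - ((j : ℕ) - (s-1))) else 0)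
    with hP
  set w : Fin ((t-1) + (s-1)) → ℚ[X] := fun j =>
    if (j : ℕ) < s - 1 then X ^ (j : ℕ) else X ^ ((j : ℕ) - (s-1)) * F with hw
  have hPw : ∀ j c, P j c = (w j).coeff (c : ℕ) := by
    intro j c
    by_cases hj : (j : ℕ) < s - 1
    · rw [hP, hw]
      simp only [Matrix.of_apply, if_pos hj]
      rw [Polynomial.coeff_X_pow]
      simp only [eq_comm]
    · rw [hP, hw]
      simp only [Matrix.of_apply, if_neg hj]
      rw [Polynomial.coeff_X_pow_mul']
  set D : Matrix (Fin (t-1) ⊕ Fin (s-1)) (Fin (t-1) ⊕ Fin (s-1)) ℚ :=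
    Matrix.fromBlocks 1 0
      (Matrix.of fun k m => (((X : ℚ[X]) ^ (k : ℕ) * G) /ₘ F).coeff (m : ℕ))
      (Matrix.of fun k j => (((X : ℚ[X]) ^ (k : ℕ) * G) %ₘ F).coeff (j : ℕ)) with hD
  set e₁ : Fin ((t-1) + (s-1)) ≃ Fin (t-1) ⊕ Fin (s-1) := finSumFinEquiv.symm with he₁
  set e₂ : Fin ((t-1) + (s-1)) ≃ Fin (t-1) ⊕ Fin (s-1) :=
    (finCongr (Nat.add_comm (t-1) (s-1))).trans
      (finSumFinEquiv.symm.trans (Equiv.sumComm (Fin (s-1)) (Fin (t-1)))) with he₂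
  have he₂l : ∀ a : Fin (t-1), ((e₂.symm (Sum.inl a) : Fin ((t-1)+(s-1))) : ℕ) = (s-1) + (a : ℕ) := by
    intro a
    simp [he₂, finCongr, Equiv.sumComm]
    omega
  have he₂r : ∀ b : Fin (s-1), ((e₂.symm (Sum.inr b) : Fin ((t-1)+(s-1))) : ℕ) = (b : ℕ) := by
    intro b
    simp [he₂, finCongr, Equiv.sumComm]
  -- the factorization
  have hfact : (Matrix.of fun i j : Fin ((t - 1) + (s - 1)) =>
      if (i : ℕ) < t - 1 then
        (if (i : ℕ) ≤ (j : ℕ) then F.coeff ((j : ℕ) - (i : ℕ)) else 0)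
      else
        (if (i : ℕ) - (t - 1) ≤ (j : ℕ) then G.coeff ((j : ℕ) - ((i : ℕ) - (t - 1)))
        else 0)) = (D.submatrix e₁ e₂) * P := by
    have hwl : ∀ a : Fin (t-1), w (e₂.symm (Sum.inl a)) = X ^ (a : ℕ) * F := by
      intro a
      simp only [hw]
      rw [he₂l a, if_neg (by omega), Nat.add_sub_cancel_left]
    have hwr : ∀ b : Fin (s-1), w (e₂.symm (Sum.inr b)) = X ^ (b : ℕ) := by
      intro b
      simp only [hw]
      rw [he₂r b, if_pos b.isLt]
    ext i c
    rw [Matrix.mul_apply]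
    symm
    have step1 : (∑ j, (D.submatrix e₁ e₂) i j * P j c)
        = ∑ z : Fin (t-1) ⊕ Fin (s-1), D (e₁ i) z * (w (e₂.symm z)).coeff (c : ℕ) := by
      refine (Fintype.sum_equiv e₂.symm _ _ fun z => ?_).symm
      rw [Matrix.submatrix_apply, Equiv.apply_symm_apply, hPw]
    rw [step1, Fintype.sum_sum_type]
    by_cases hi : (i : ℕ) < t - 1
    · have he₁i : e₁ i = Sum.inl ⟨(i : ℕ), hi⟩ := by
        rw [he₁, Equiv.symm_apply_eq]
        exact Fin.ext (by simp)
      rw [he₁i]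
      simp only [hD, Matrix.fromBlocks_apply₁₁, Matrix.fromBlocks_apply₁₂, Matrix.zero_apply,
        zero_mul, Finset.sum_const_zero, add_zero]
      rw [Finset.sum_eq_single (⟨(i : ℕ), hi⟩ : Fin (t-1))]
      · rw [Matrix.one_apply_eq, one_mul, hwl, Polynomial.coeff_X_pow_mul']
        simp only [Matrix.of_apply, if_pos hi]
      · intro b _ hb
        rw [Matrix.one_apply_ne (Ne.symm hb), zero_mul]
      · intro hmem
        exact absurd (Finset.mem_univ _) hmem
    · have hik : (i : ℕ) - (t-1) < s - 1 := by
        have := i.isLt; omega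
      have he₁i : e₁ i = Sum.inr ⟨(i : ℕ) - (t-1), hik⟩ := by
        rw [he₁, Equiv.symm_apply_eq]
        refine Fin.ext ?_
        simp
        omega
      rw [he₁i]
      simp only [hD, Matrix.fromBlocks_apply₂₁, Matrix.fromBlocks_apply₂₂, Matrix.of_apply]
      set k : ℕ := (i : ℕ) - (t-1) with hk
      set q : ℚ[X] := ((X : ℚ[X]) ^ k * G) /ₘ F with hq
      set r : ℚ[X] := ((X : ℚ[X]) ^ k * G) %ₘ F with hr
      have hXG : ((X : ℚ[X]) ^ k * G) ≠ 0 := mul_ne_zero (pow_ne_zero _ X_ne_zero) hGm.ne_zero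
      have hqb : ∀ m, t - 1 ≤ m → q.coeff m = 0 := by
        by_cases hq0 : q = 0
        · intro m _; rw [hq0, Polynomial.coeff_zero]
        have hne : ¬ ((X : ℚ[X]) ^ k * G).degree < F.degree := fun hlt =>
          hq0 ((Polynomial.divByMonic_eq_zero_iff hFm).mpr hlt)
        have hdXG : ((X : ℚ[X]) ^ k * G).natDegree = k + (t-1) := by
          rw [Polynomial.natDegree_mul (pow_ne_zero _ X_ne_zero) hGm.ne_zero,
            Polynomial.natDegree_X_pow, hGd]
        have hge : s - 1 ≤ k + (t-1) := by
          by_contra hlt2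
          refine hne ?_
          rw [Polynomial.degree_eq_natDegree hXG, Polynomial.degree_eq_natDegree hFm.ne_zero,
            hdXG, hFd]
          exact_mod_cast by omega
        have hdq : q.natDegree = k + (t-1) - (s-1) := by
          rw [hq, Polynomial.natDegree_divByMonic _ hFm, hdXG, hFd]
        intro m hm
        apply Polynomial.coeff_eq_zero_of_natDegree_lt
        rw [hdq]
        omega
      have hrb : ∀ m, s - 1 ≤ m → r.coeff m = 0 := by
        intro m hm
        apply Polynomial.coeff_eq_zero_of_degree_lt
        refine lt_of_lt_of_le (Polynomial.degree_modByMonic_lt _ hFm) ?_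
        rw [Polynomial.degree_eq_natDegree hFm.ne_zero, hFd]
        exact_mod_cast hm
      have h1 : ∑ a : Fin (t-1), q.coeff (a : ℕ) * (w (e₂.symm (Sum.inl a))).coeff (c : ℕ)
          = (q * F).coeff (c : ℕ) := by
        conv_rhs => rw [← sum_coeff_smul q hqb]
        rw [Finset.sum_mul, Polynomial.finset_sum_coeff]
        refine Finset.sum_congr rfl fun a _ => ?_
        rw [hwl, smul_mul_assoc, Polynomial.coeff_smul, smul_eq_mul]
      have h2 : ∑ b : Fin (s-1), r.coeff (b : ℕ) * (w (e₂.symm (Sum.inr b))).coeff (c : ℕ)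
          = r.coeff (c : ℕ) := by
        conv_rhs => rw [← sum_coeff_smul r hrb]
        rw [Polynomial.finset_sum_coeff]
        refine Finset.sum_congr rfl fun b _ => ?_
        rw [hwr, Polynomial.coeff_smul, smul_eq_mul]
      rw [h1, h2, ← Polynomial.coeff_add]
      have h3 : q * F + r = X ^ k * G := by
        have h := Polynomial.modByMonic_add_div ((X : ℚ[X]) ^ k * G) F
        rw [← hq, ← hr] at h
        rw [← h]; ring
      rw [h3, Polynomial.coeff_X_pow_mul']
      simp only [Matrix.of_apply, if_neg hi]
  rw [hfact, Matrix.det_mul]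
  have hdetP : P.det = 1 := by
    have htri : P.BlockTriangular OrderDual.toDual := by
      intro i j hij
      have hij' : (i : ℕ) < (j : ℕ) := hij
      rw [hP]
      simp only [Matrix.of_apply]
      split_ifs with h1 h2 h3
      · omega
      · rfl
      · rw [hF, geom_coeff, if_neg (by omega)]
      · rfl
    rw [Matrix.det_of_lowerTriangular P htri]
    refine Finset.prod_eq_one fun j _ => ?_
    rw [hP]
    simp only [Matrix.of_apply]
    by_cases hj : (j : ℕ) < s - 1
    · rw [if_pos hj]
      simp
    · rw [if_neg hj, if_pos (by omega), hF, geom_coeff,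
        if_pos (by omega)]
  have hdetD : (D.submatrix e₁ e₂).det = 1 := by
    have hsub : D.submatrix e₁ e₂ = (D.submatrix e₁ e₁).submatrix id (e₂.trans e₁.symm) := by
      ext i j
      simp [Matrix.submatrix_apply]
    rw [hsub, Matrix.det_permute' (e₂.trans e₁.symm) (D.submatrix e₁ e₁),
      Matrix.det_submatrix_equiv_self e₁]
    have hsign : Equiv.Perm.sign (e₂.trans e₁.symm) = 1 := by
      refine sign_of_addRotate _ (t-1) (s-1) (by omega) (fun j => ?_) heven
      have hval : ((e₁.symm (e₂ j)) : ℕ)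
          = if (j : ℕ) < s - 1 then (j : ℕ) + (t-1) else (j : ℕ) - (s-1) := by
        by_cases hj : (j : ℕ) < s - 1
        · have h2 : e₂ j = Sum.inr ⟨(j : ℕ), hj⟩ := by
            rw [Equiv.apply_eq_iff_eq_symm_apply]
            exact Fin.ext (by rw [he₂r])
          rw [h2, if_pos hj, he₁]
          simp
          omega
        · have hjk : (j : ℕ) - (s-1) < t - 1 := by have := j.isLt; omega
          have h2 : e₂ j = Sum.inl ⟨(j : ℕ) - (s-1), hjk⟩ := by
            rw [Equiv.apply_eq_iff_eq_symm_apply]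
            refine Fin.ext ?_
            rw [he₂l]
            simp
            omega
          rw [h2, if_neg hj, he₁]
          simp
      rw [Equiv.trans_apply, hval]
      by_cases hj : (j : ℕ) < s - 1
      · rw [if_pos hj, Nat.mod_eq_of_lt (by omega)]
      · rw [if_neg hj]
        have hN : (t-1) + (s-1) ≤ (j : ℕ) + (t-1) := by omega
        rw [Nat.mod_eq_sub_mod hN]
        have hlt : (j : ℕ) + (t-1) - ((t-1) + (s-1)) < (t-1) + (s-1) := by
          have := j.isLt; omega
        rw [Nat.mod_eq_of_lt hlt]
        omega
    rw [hsign]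
    simp only [Units.val_one, Int.cast_one, one_mul]
    rw [hD, Matrix.det_fromBlocks_zero₁₂, Matrix.det_one, one_mul]
    exact det_modmat_eq_one hs hcop
  rw [hdetP, hdetD, mul_one]

/-- The Sylvester-matrix resultant of two integer polynomials `f` and `g`
(with `g.natDegree` rows of coefficients of `f` and `f.natDegree` rows of
coefficients of `g`). -/
noncomputable def intResultant (f g : Polynomial ℤ) : ℤ :=
  Matrix.det (Matrix.of fun i j : Fin (g.natDegree + f.natDegree) =>
    if (i : ℕ) < g.natDegree then
      (if (i : ℕ) ≤ (j : ℕ) then f.coeff ((j : ℕ) - (i : ℕ)) else 0)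
    else
      (if (i : ℕ) - g.natDegree ≤ (j : ℕ) then g.coeff ((j : ℕ) - ((i : ℕ) - g.natDegree)) else 0))

theorem stmt0 (s n : ℕ) (hs : 1 ≤ s) (hsn : s < n) (hcop : Nat.Coprime s n) :
    intResultant (∑ i ∈ Finset.range s, (X : Polynomial ℤ) ^ i)
      (∑ i ∈ Finset.range (n - s), (X : Polynomial ℤ) ^ i) = 1 := by
  set t := n - s with htdef
  have ht : 1 ≤ t := by omega
  set f : ℤ[X] := ∑ i ∈ Finset.range s, X ^ i with hf
  set g : ℤ[X] := ∑ i ∈ Finset.range t, X ^ i with hg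
  have hfd : f.natDegree = s - 1 := geom_natDegree ℤ hs
  have hgd : g.natDegree = t - 1 := geom_natDegree ℤ ht
  have hgcd : Nat.gcd s n = 1 := hcop
  have hcop2 : Nat.Coprime t s := by
    have hd1 : Nat.gcd t s ∣ s := Nat.gcd_dvd_right _ _
    have hd2 : Nat.gcd t s ∣ n := by
      have h := Nat.dvd_add (Nat.gcd_dvd_left t s) hd1
      rwa [htdef, Nat.sub_add_cancel (le_of_lt hsn)] at h
    have hdd : Nat.gcd t s ∣ Nat.gcd s n := Nat.dvd_gcd hd1 hd2
    rw [hgcd] at hdd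
    exact Nat.dvd_one.mp hdd
  have heven : Even ((s - 1) * (t - 1)) := by
    rcases Nat.even_or_odd s with hse | hso
    · have hno : ¬ Even n := by
        intro hne
        have h2 : 2 ∣ Nat.gcd s n := Nat.dvd_gcd hse.two_dvd hne.two_dvd
        rw [hgcd] at h2
        omega
      have hnodd : Odd n := Nat.not_even_iff_odd.mp hno
      have htodd : Odd t := by
        rw [htdef]
        exact Nat.Odd.sub_even (le_of_lt hsn) hnodd hse
      exact Nat.even_mul.mpr (Or.inr (Nat.Odd.sub_odd htodd odd_one))
    · exact Nat.even_mul.mpr (Or.inl (Nat.Odd.sub_odd hso odd_one))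
  have hdim : (t - 1) + (s - 1) = g.natDegree + f.natDegree := by rw [hfd, hgd]
  rw [intResultant, ← Matrix.det_submatrix_equiv_self (finCongr hdim)]
  set M : Matrix (Fin ((t-1) + (s-1))) (Fin ((t-1) + (s-1))) ℤ :=
    (Matrix.of fun i j : Fin (g.natDegree + f.natDegree) =>
      if (i : ℕ) < g.natDegree then
        (if (i : ℕ) ≤ (j : ℕ) then f.coeff ((j : ℕ) - (i : ℕ)) else 0)
      else
        (if (i : ℕ) - g.natDegree ≤ (j : ℕ) then g.coeff ((j : ℕ) - ((i : ℕ) - g.natDegree))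
        else 0)).submatrix (finCongr hdim) (finCongr hdim) with hM
  have hmapeq : M.map (Int.cast : ℤ → ℚ) = (Matrix.of fun i j : Fin ((t - 1) + (s - 1)) =>
      if (i : ℕ) < t - 1 then
        (if (i : ℕ) ≤ (j : ℕ) then
          (∑ k ∈ Finset.range s, (X : ℚ[X]) ^ k).coeff ((j : ℕ) - (i : ℕ)) else 0)
      else
        (if (i : ℕ) - (t - 1) ≤ (j : ℕ) then
          (∑ k ∈ Finset.range t, (X : ℚ[X]) ^ k).coeff ((j : ℕ) - ((i : ℕ) - (t - 1)))
        else 0)) := by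
    ext i j
    simp only [hM, Matrix.map_apply, Matrix.submatrix_apply, Matrix.of_apply, finCongr_apply,
      Fin.coe_cast, hgd]
    simp only [hf, hg, geom_coeff]
    split_ifs <;> simp
  have hQ : (M.det : ℚ) = 1 := by
    have h := RingHom.map_det (Int.castRingHom ℚ) M
    have h2 : ((Int.castRingHom ℚ).mapMatrix M) = M.map (Int.cast : ℤ → ℚ) := rfl
    rw [h2, hmapeq] at h
    rw [show ((M.det : ℤ) : ℚ) = (Int.castRingHom ℚ) M.det from rfl, h]
    exact key_det s t hs ht hcop2 heven
  exact_mod_cast hQ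
end

section
/- Let G = ⟨X, Y | X^5 = Y^4 = 1, Y X Y^{-1} = X^2⟩ (the group GA(1,5) of order 20). The integer group determinant of the element -Y of ℤ[G] equals -1. Consequently, if m is an integer group determinant of G, then so is -m. -/
open Equiv Equiv.Perm

lemma signH {G : Type*} [Group G] [Fintype G] [DecidableEq G] (Y : G) (hord : orderOf Y = 4) :
    Equiv.Perm.sign (Equiv.mulRight (⟨Y, Subgroup.mem_zpowers Y⟩ : Subgroup.zpowers Y)) = -1 := by
  classical
  set H := Subgroup.zpowers Y with hH
  set y : H := ⟨Y, Subgroup.mem_zpowers Y⟩ with hydef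
  have hcardH : Fintype.card H = 4 := by rw [Fintype.card_zpowers, hord]
  have hy1 : y ≠ 1 := by
    intro h
    have : orderOf y = 4 := by rw [hydef, Subgroup.orderOf_mk, hord]
    rw [h, orderOf_one] at this; omega
  set σ : Equiv.Perm H := Equiv.mulRight y with hσ
  have hfix : ∀ z : H, σ z ≠ z := by
    intro z h
    have h2 : z * y = z := by simpa [hσ] using h
    exact hy1 (by rwa [mul_eq_left] at h2)
  have hpow : ∀ (n : ℕ) (z : H), (σ ^ n) z = z * y ^ n := by
    intro n
    induction n with
    | zero => simp
    | succ n ih =>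
      intro z
      rw [pow_succ', Equiv.Perm.mul_apply, ih]
      simp only [hσ, Equiv.coe_mulRight]
      rw [mul_assoc, ← pow_succ]
  have hcyc : σ.IsCycle := by
    refine ⟨1, hfix 1, fun z hz => ?_⟩
    obtain ⟨n, hn⟩ : (z : G) ∈ Submonoid.powers Y := by
      rw [mem_powers_iff_mem_zpowers]; exact z.2
    refine ⟨(n : ℤ), ?_⟩
    rw [zpow_natCast, hpow, one_mul]
    ext
    push_cast
    exact hn
  have hsupp : σ.support = Finset.univ := by
    rw [Finset.eq_univ_iff_forall]; intro z; rw [Equiv.Perm.mem_support]; exact hfix z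
  have := hcyc.sign
  rw [hsupp, Finset.card_univ, hcardH] at this
  rw [this]; decide

lemma signG {G : Type*} [Group G] [Fintype G] [DecidableEq G] (Y : G) (hord : orderOf Y = 4)
    (hcard : Fintype.card G = 20) :
    Equiv.Perm.sign (Equiv.mulRight Y : Equiv.Perm G) = -1 := by
  classical
  set H := Subgroup.zpowers Y with hH
  set y : H := ⟨Y, Subgroup.mem_zpowers Y⟩ with hydef
  have hmemH : ∀ g : G, (QuotientGroup.mk g : G ⧸ H).out⁻¹ * g ∈ H := by
    intro g
    rw [← QuotientGroup.eq, QuotientGroup.out_eq']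
  let e : G ≃ (G ⧸ H) × H :=
    { toFun := fun g => (QuotientGroup.mk g, ⟨(QuotientGroup.mk g : G ⧸ H).out⁻¹ * g, hmemH g⟩)
      invFun := fun p => p.1.out * p.2
      left_inv := fun g => by simp
      right_inv := fun p => by
        have h1 : (QuotientGroup.mk (p.1.out * (p.2 : G)) : G ⧸ H) = p.1 := by
          rw [QuotientGroup.mk_mul_of_mem _ p.2.2, QuotientGroup.out_eq']
        refine Prod.ext h1 (Subtype.ext ?_)
        simp only [h1]
        group }
  have hcomm : ∀ g : G, e ((Equiv.mulRight Y) g)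
      = (Equiv.prodCongrRight fun _ : G ⧸ H => Equiv.mulRight y) (e g) := by
    intro g
    have h1 : (QuotientGroup.mk (g * Y) : G ⧸ H) = QuotientGroup.mk g :=
      QuotientGroup.mk_mul_of_mem _ (Subgroup.mem_zpowers Y)
    simp only [e, Equiv.coe_mulRight, Equiv.coe_fn_mk, Equiv.prodCongrRight_apply]
    refine Prod.ext h1 (Subtype.ext ?_)
    push_cast
    simp only [h1]
    group
    rfl
  rw [Equiv.Perm.sign_eq_sign_of_equiv _ _ e hcomm, Equiv.Perm.sign_prodCongrRight]
  have hq : Fintype.card (G ⧸ H) = 5 := by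
    have := Subgroup.card_eq_card_quotient_mul_card_subgroup H
    simp only [Nat.card_eq_fintype_card] at this
    rw [hcard] at this
    have h4 : Fintype.card H = 4 := by rw [Fintype.card_zpowers, hord]
    rw [h4] at this
    omega
  rw [Finset.prod_const, Finset.card_univ, hq, signH Y hord]
  decide

lemma ordY {G : Type*} [Group G] [Fintype G] [DecidableEq G] (X Y : G)
    (hX : X ^ 5 = 1) (hY : Y ^ 4 = 1) (hconj : Y * X * Y⁻¹ = X ^ 2)
    (hgen : Subgroup.closure {X, Y} = ⊤) (hcard : Fintype.card G = 20) :
    orderOf Y = 4 := by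
  have hY2 : Y ^ 2 ≠ 1 := by
    intro h2
    have hYinv : Y⁻¹ = Y := by
      rw [inv_eq_iff_mul_eq_one, ← sq]; exact h2
    have hc : Y * X * Y = X ^ 2 := by rwa [hYinv] at hconj
    have hX4 : X ^ 4 = X := by
      have : X ^ 4 = (Y * X * Y) * (Y * X * Y) := by
        rw [show (4:ℕ) = 2 + 2 from rfl, pow_add, hc]
      rw [this]
      calc Y * X * Y * (Y * X * Y) = Y * X * (Y * Y) * X * Y := by group
        _ = Y * (X * X) * Y := by rw [← sq, h2]; group
        _ = Y * X ^ 2 * Y := by rw [sq]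
        _ = Y * (Y * X * Y) * Y := by rw [hc]
        _ = (Y * Y) * X * (Y * Y) := by group
        _ = X := by rw [← sq, h2]; group
    have hX3 : X ^ 3 = 1 := by
      have : X ^ 4 * X⁻¹ = X * X⁻¹ := by rw [hX4]
      simpa [pow_succ, mul_assoc] using this
    have hX1 : X = 1 := by
      have hd3 : orderOf X ∣ 3 := orderOf_dvd_of_pow_eq_one hX3
      have hd5 : orderOf X ∣ 5 := orderOf_dvd_of_pow_eq_one hX
      have := Nat.dvd_gcd hd3 hd5
      norm_num at this
      exact this
    have htop : ∀ g : G, g ∈ Subgroup.zpowers Y := by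
      intro g
      have hg : g ∈ Subgroup.closure {X, Y} := by rw [hgen]; trivial
      refine Subgroup.closure_le (Subgroup.zpowers Y) |>.mpr ?_ hg
      intro z hz
      rcases hz with rfl | rfl
      · rw [hX1]; exact Subgroup.one_mem _
      · exact Subgroup.mem_zpowers z
    have h20 : orderOf Y = 20 := by
      rw [orderOf_eq_card_of_forall_mem_zpowers htop, Nat.card_eq_fintype_card, hcard]
    have : Y ^ 4 ≠ 1 := by
      intro h
      have := orderOf_dvd_of_pow_eq_one h
      rw [h20] at this
      omega
    exact this hY
  have hd : orderOf Y ∣ 4 := orderOf_dvd_of_pow_eq_one hY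
  have hnd2 : ¬ orderOf Y ∣ 2 := fun h => hY2 (orderOf_dvd_iff_pow_eq_one.mp h)
  have hle : orderOf Y ≤ 4 := Nat.le_of_dvd (by norm_num) hd
  have hpos : 0 < orderOf Y := orderOf_pos Y
  interval_cases h : orderOf Y <;> omega


/-- The integer group determinant of a coefficient vector `a : G → ℤ`:
the determinant of the matrix `(a (g * h⁻¹))` with rows indexed by `g` and
columns by `h`. -/
def grpDet {G : Type*} [Group G] [Fintype G] [DecidableEq G] (a : G → ℤ) : ℤ :=
  Matrix.det (Matrix.of fun g h : G => a (g * h⁻¹))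

/-- For `G = GA(1,5) = ⟨X, Y | X^5 = Y^4 = 1, YXY⁻¹ = X^2⟩`, the integer group
determinant of `-Y` equals `-1`, and consequently the set of integer group
determinants is closed under negation. -/
theorem stmt6 {G : Type*} [Group G] [Fintype G] [DecidableEq G] (X Y : G)
    (hX : X ^ 5 = 1) (hY : Y ^ 4 = 1) (hconj : Y * X * Y⁻¹ = X ^ 2)
    (hgen : Subgroup.closure {X, Y} = ⊤) (hcard : Fintype.card G = 20) :
    grpDet (fun g => if g = Y then (-1 : ℤ) else 0) = -1 ∧
      ∀ m : ℤ, (∃ a : G → ℤ, grpDet a = m) → ∃ b : G → ℤ, grpDet b = -m := by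
  classical
  have hord : orderOf Y = 4 := ordY X Y hX hY hconj hgen hcard
  have hsign : Equiv.Perm.sign (Equiv.mulLeft Y⁻¹ : Equiv.Perm G) = -1 := by
    rw [Equiv.Perm.sign_eq_sign_of_equiv (Equiv.mulLeft Y⁻¹) (Equiv.mulRight Y) (Equiv.inv G)
      (by intro x; simp [mul_inv_rev])]
    exact signG Y hord hcard
  have hM : (Matrix.of fun g h : G => (fun g => if g = Y then (-1:ℤ) else 0) (g * h⁻¹))
      = (-1 : ℤ) • ((Equiv.mulLeft Y⁻¹).permMatrix ℤ) := by
    ext g h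
    simp only [Matrix.of_apply, Matrix.smul_apply, Equiv.Perm.permMatrix,
      PEquiv.toMatrix_apply, Equiv.toPEquiv_apply, Option.mem_def, Option.some.injEq,
      Equiv.coe_mulLeft, smul_eq_mul]
    by_cases hcase : g * h⁻¹ = Y
    · have h2 : Y⁻¹ * g = h := by rw [← hcase]; group
      simp [hcase, h2]
    · have h2 : Y⁻¹ * g ≠ h := by intro hh; apply hcase; rw [← hh]; group
      simp [hcase, h2]
  have hpart1 : grpDet (fun g => if g = Y then (-1 : ℤ) else 0) = -1 := by
    rw [grpDet, hM, Matrix.det_smul, Matrix.det_permutation, hcard, hsign]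
    norm_num
  refine ⟨hpart1, ?_⟩
  rintro m ⟨a, ha⟩
  refine ⟨fun g => -a (Y⁻¹ * g), ?_⟩
  have hprod : (Matrix.of fun g h : G => (fun g => -a (Y⁻¹ * g)) (g * h⁻¹))
      = (Matrix.of fun g h : G => (fun g => if g = Y then (-1:ℤ) else 0) (g * h⁻¹))
        * (Matrix.of fun g h : G => a (g * h⁻¹)) := by
    ext g h
    rw [Matrix.mul_apply]
    simp only [Matrix.of_apply]
    rw [Finset.sum_eq_single (Y⁻¹ * g)]
    · have h1 : g * (Y⁻¹ * g)⁻¹ = Y := by group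
      rw [if_pos h1, mul_assoc]
      ring
    · intro k _ hk
      have h2 : g * k⁻¹ ≠ Y := by
        intro hh; apply hk; rw [← hh]; group
      rw [if_neg h2, zero_mul]
    · intro hmem; exact absurd (Finset.mem_univ _) hmem
  calc grpDet (fun g => -a (Y⁻¹ * g))
      = (grpDet (fun g => if g = Y then (-1:ℤ) else 0)) * grpDet a := by
        rw [grpDet, hprod, Matrix.det_mul]; rfl
    _ = -m := by rw [hpart1, ha]; ring
end
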